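/- arXiv:2008.11594 — 7 statements merged into one kernel-verified Lean document; each statement's English description precedes it below -/
import Mathlib

section
/- Let g, C, B⁻, B⁺, Ẋ, Ẏ, n_x, n_y, α be arbitrary real numbers, and suppose the interior and exterior traces satisfy the lake-at-rest conditions h⁻ + B⁻ = h⁺ + B⁺ = C and m⁻ = m⁺ = 0, w⁻ = w⁺ = 0. Then the modified numerical flux in the original variables reduces exactly to the interior flux: (1/2)( Gn(h*⁻, m*⁻, w*⁻) + Gn(h*⁺, m*⁺, w*⁺) ) − (α/2)( (h*⁺, m*⁺, w*⁺) − (h*⁻, m*⁻, w*⁻) ) + Δ* = Gn(h⁻, 0, 0). -/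
/-- The ALE shallow-water flux in the original variables `(h, m, w)`,
dotted with the direction `(nx, ny)`, for mesh velocity `(Xd, Yd)`. -/
noncomputable def Gflux (g Xd Yd nx ny h m w : ℝ) : ℝ × ℝ × ℝ :=
  ( m * nx + w * ny - (Xd * nx + Yd * ny) * h,
    (m ^ 2 / h + g / 2 * h ^ 2) * nx + m * w / h * ny - (Xd * nx + Yd * ny) * m,
    m * w / h * nx + (w ^ 2 / h + g / 2 * h ^ 2) * ny - (Xd * nx + Yd * ny) * w )

/-- At the lake-at-rest steady state, the modified numerical flux in the original
variables (hydrostatic reconstruction + global Lax–Friedrichs + correction term `Δ*`)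
reduces exactly to the interior flux `Gn(h⁻, 0, 0)`. -/
theorem wellBalanced_flux_original_variables_reduces_to_interior_flux
    (g C Bm Bp Xd Yd nx ny α : ℝ)
    (hm hp mm mp wm wp : ℝ)
    (hCm : hm + Bm = C) (hCp : hp + Bp = C)
    (hmm : mm = 0) (hmp : mp = 0)
    (hwm : wm = 0) (hwp : wp = 0) :
    let hsm : ℝ := max 0 (hm + Bm - max Bm Bp)
    let hsp : ℝ := max 0 (hp + Bp - max Bm Bp)
    let msm : ℝ := hsm / hm * mm
    let msp : ℝ := hsp / hp * mp
    let wsm : ℝ := hsm / hm * wm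
    let wsp : ℝ := hsp / hp * wp
    (1 / 2 : ℝ) • (Gflux g Xd Yd nx ny hsm msm wsm + Gflux g Xd Yd nx ny hsp msp wsp)
        - (α / 2) • ((hsp, msp, wsp) - (hsm, msm, wsm))
        + ((Xd * nx + Yd * ny) * (hsm - hm),
            g / 2 * (hm ^ 2 - hsm ^ 2) * nx,
            g / 2 * (hm ^ 2 - hsm ^ 2) * ny)
      = Gflux g Xd Yd nx ny hm 0 0 := by
  subst hmm hmp hwm hwp
  have hsame : max 0 (hp + Bp - max Bm Bp) = max 0 (hm + Bm - max Bm Bp) := by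
    rw [hCm, hCp]
  intro hsm hsp msm msp wsm wsp
  have h1 : hsp = hsm := hsame
  simp only [hsm, hsp, msm, msp, wsm, wsp, Gflux, hsame, mul_zero, zero_mul, zero_div, zero_add,
    Prod.smul_mk, Prod.mk_add_mk, Prod.mk_sub_mk, sub_self, smul_zero, smul_eq_mul, zero_pow,
    add_zero, sub_zero]
  refine Prod.ext ?_ (Prod.ext ?_ ?_) <;> simp <;> ring
end

section
/- Let u, v, c, Ẋ, Ẏ, n_x, n_y be real numbers with n_x² + n_y² = 1, and let M be the 3×3 real matrix with rows ( −Ẋ n_x − Ẏ n_y , n_x , n_y ), ( (c² − u²) n_x − u v n_y , (2u − Ẋ) n_x + (v − Ẏ) n_y , u n_y ), ( (c² − v²) n_y − u v n_x , v n_x , (u − Ẋ) n_x + (2v − Ẏ) n_y ). Set μ = (u − Ẋ) n_x + (v − Ẏ) n_y. Then for every λ ∈ ℝ, det(λ·I − M) = (λ − (μ − c))·(λ − μ)·(λ − (μ + c)); in particular the eigenvalues of M are μ − c, μ, and μ + c. -/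
/-- The Jacobian matrix `M` of the moving-mesh shallow-water flux `H(U, h)·n`
with respect to `U = (η, m, w)` has characteristic polynomial
`(λ - (μ - c))(λ - μ)(λ - (μ + c))` with `μ = (u - Ẋ)nx + (v - Ẏ)ny`,
so its eigenvalues are `μ - c`, `μ`, `μ + c`. -/
theorem charpoly_of_moving_mesh_swe_jacobian
    (u v c Xd Yd nx ny : ℝ) (hn : nx ^ 2 + ny ^ 2 = 1) :
    ∀ lam : ℝ,
      (lam • (1 : Matrix (Fin 3) (Fin 3) ℝ) -
          !![ -Xd * nx - Yd * ny, nx, ny;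
              (c ^ 2 - u ^ 2) * nx - u * v * ny, (2 * u - Xd) * nx + (v - Yd) * ny, u * ny;
              (c ^ 2 - v ^ 2) * ny - u * v * nx, v * nx,
                (u - Xd) * nx + (2 * v - Yd) * ny ]).det
        = (lam - ((u - Xd) * nx + (v - Yd) * ny - c)) *
            (lam - ((u - Xd) * nx + (v - Yd) * ny)) *
            (lam - ((u - Xd) * nx + (v - Yd) * ny + c)) := by
  intro lam
  rw [Matrix.det_fin_three]
  simp [Matrix.smul_apply, Matrix.one_apply]
  linear_combination (-(c ^ 2) * (lam - ((u - Xd) * nx + (v - Yd) * ny))) * hn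
end

section
/- Let g, C ∈ ℝ and a < b be real numbers, let B, Ẋ, φ : ℝ → ℝ be continuously differentiable, and let B_a, B_b ∈ ℝ. Set h(x) = C − B(x), h*_a = max(0, C − max(B(a), B_a)), h*_b = max(0, C − max(B(b), B_b)), and define the well-balanced boundary fluxes Ĥ*_b = ( −C·Ẋ(b) , (g/2)(2 h*_b C − C²) + g C (h(b) − h*_b) ) and Ĥ*_a = ( C·Ẋ(a) , −[ (g/2)(2 h*_a C − C²) + g C (h(a) − h*_a) ] ). Then both components of the discrete residual vanish: (i) ∫_a^b (−C·Ẋ(x)) φ′(x) dx − φ(b)·Ĥ*_{b,1} − φ(a)·Ĥ*_{a,1} − ∫_a^b φ(x)·C·Ẋ′(x) dx = 0, and (ii) ∫_a^b (−g C B′(x)) φ(x) dx + ∫_a^b (g/2)(2 h(x) C − C²) φ′(x) dx − φ(b)·Ĥ*_{b,2} − φ(a)·Ĥ*_{a,2} = 0. -/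
open intervalIntegral

/-- One-dimensional well-balance of the semi-discrete quasi-Lagrange moving mesh DG
scheme in the variables `(η, m) = (h + B, hu)`: at the lake-at-rest state `η ≡ C`,
`m ≡ 0`, both components of the discrete residual on the element `[a, b]` vanish. -/
theorem semi_discrete_QLMMDG_well_balanced_eta_variables
    (g C a b : ℝ) (hab : a < b) (B Xd φ : ℝ → ℝ)
    (hB : ContDiff ℝ 1 B) (hX : ContDiff ℝ 1 Xd) (hφ : ContDiff ℝ 1 φ)
    (Ba Bb : ℝ) :
    let h : ℝ → ℝ := fun x => C - B x
    let hsa : ℝ := max 0 (C - max (B a) Ba)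
    let hsb : ℝ := max 0 (C - max (B b) Bb)
    let Hb : ℝ × ℝ := (-C * Xd b, g / 2 * (2 * hsb * C - C ^ 2) + g * C * (h b - hsb))
    let Ha : ℝ × ℝ := (C * Xd a, -(g / 2 * (2 * hsa * C - C ^ 2) + g * C * (h a - hsa)))
    ((∫ x in a..b, (-C * Xd x) * deriv φ x) - φ b * Hb.1 - φ a * Ha.1
        - ∫ x in a..b, φ x * (C * deriv Xd x)) = 0 ∧
    ((∫ x in a..b, (-(g * C * deriv B x)) * φ x)
        + (∫ x in a..b, g / 2 * (2 * h x * C - C ^ 2) * deriv φ x)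
        - φ b * Hb.2 - φ a * Ha.2) = 0 := by
  intro h hsa hsb Hb Ha
  have hBd : ∀ x, HasDerivAt B (deriv B x) x :=
    fun x => (hB.differentiable one_ne_zero x).hasDerivAt
  have hXd : ∀ x, HasDerivAt Xd (deriv Xd x) x :=
    fun x => (hX.differentiable one_ne_zero x).hasDerivAt
  have hφd : ∀ x, HasDerivAt φ (deriv φ x) x :=
    fun x => (hφ.differentiable one_ne_zero x).hasDerivAt
  have hBc : Continuous (deriv B) := hB.continuous_deriv le_rfl
  have hXc : Continuous (deriv Xd) := hX.continuous_deriv le_rfl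
  have hφc : Continuous (deriv φ) := hφ.continuous_deriv le_rfl
  constructor
  · -- first component
    have key : (∫ x in a..b, (C * deriv Xd x) * φ x + (C * Xd x) * deriv φ x)
        = (C * Xd b) * φ b - (C * Xd a) * φ a := by
      apply integral_deriv_mul_eq_sub
        (fun x _ => ((hXd x).const_mul C)) (fun x _ => hφd x)
      · exact (continuous_const.mul hXc).intervalIntegrable a b
      · exact hφc.intervalIntegrable a b
    rw [integral_add (f := fun x => (C * deriv Xd x) * φ x) (g := fun x => (C * Xd x) * deriv φ x)
        (((continuous_const.mul hXc).mul hφ.continuous).intervalIntegrable a b)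
        (((continuous_const.mul hX.continuous).mul hφc).intervalIntegrable a b)] at key
    have e1 : (∫ x in a..b, (-C * Xd x) * deriv φ x)
        = -∫ x in a..b, (C * Xd x) * deriv φ x := by
      rw [← integral_neg]; congr 1; ext x; ring
    have e2 : (∫ x in a..b, φ x * (C * deriv Xd x))
        = ∫ x in a..b, (C * deriv Xd x) * φ x := by
      congr 1; ext x; ring
    simp only [Hb, Ha]
    rw [e1, e2]
    linarith [key]
  · -- second component
    set F : ℝ → ℝ := fun x => g / 2 * (2 * h x * C - C ^ 2) with hF
    have hFd : ∀ x, HasDerivAt F (-(g * C * deriv B x)) x := by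
      intro x
      have h1 : HasDerivAt (fun x => C - B x) (0 - deriv B x) x :=
        (hasDerivAt_const x C).sub (hBd x)
      have h2 : HasDerivAt (fun x => 2 * (C - B x) * C - C ^ 2)
          ((2 * (0 - deriv B x)) * C - 0) x :=
        (((h1.const_mul 2).mul_const C)).sub (hasDerivAt_const x (C ^ 2))
      have h3 := h2.const_mul (g / 2)
      exact h3.congr_deriv (by ring)
    have key : (∫ x in a..b, (-(g * C * deriv B x)) * φ x + F x * deriv φ x)
        = F b * φ b - F a * φ a := by
      apply integral_deriv_mul_eq_sub (fun x _ => hFd x) (fun x _ => hφd x)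
      · exact ((continuous_const.mul hBc).neg).intervalIntegrable a b
      · exact hφc.intervalIntegrable a b
    rw [integral_add (f := fun x => (-(g * C * deriv B x)) * φ x) (g := fun x => F x * deriv φ x)
        ((((continuous_const.mul hBc).neg).mul hφ.continuous).intervalIntegrable a b)
        (by
          have hFc : Continuous F := by
            apply Continuous.mul continuous_const
            exact ((continuous_const.mul ((continuous_const.sub hB.continuous)) ).mul
              continuous_const).sub continuous_const
          exact (hFc.mul hφc).intervalIntegrable a b)] at key
    have hHb : Hb.2 = F b := by simp only [Hb, hF, h]; ring
    have hHa : Ha.2 = -F a := by simp only [Ha, hF, h]; ring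
    rw [hHb, hHa]
    have : (∫ x in a..b, g / 2 * (2 * h x * C - C ^ 2) * deriv φ x)
        = ∫ x in a..b, F x * deriv φ x := by rfl
    rw [this]
    linarith [key]
end

section
/- Let g, C ∈ ℝ and a < b be real numbers, let B, Ẋ, φ : ℝ → ℝ be continuously differentiable, and let B_a, B_b ∈ ℝ. Set h(x) = C − B(x), h*_a = max(0, h(a) + B(a) − max(B(a), B_a)), h*_b = max(0, h(b) + B(b) − max(B(b), B_b)), and define the boundary fluxes Ĥ*_b = ( −Ẋ(b)·h*_b + Ẋ(b)(h*_b − h(b)) , (g/2)(h*_b)² + (g/2)(h(b)² − (h*_b)²) ) and Ĥ*_a = ( Ẋ(a)·h*_a − Ẋ(a)(h*_a − h(a)) , −[ (g/2)(h*_a)² + (g/2)(h(a)² − (h*_a)²) ] ). Then both components of the discrete residual vanish: (i) ∫_a^b (−Ẋ(x) h(x)) φ′(x) dx − φ(b)·Ĥ*_{b,1} − φ(a)·Ĥ*_{a,1} − ∫_a^b φ(x)·(h Ẋ)′(x) dx = 0, and (ii) ∫_a^b (−g h(x) B′(x)) φ(x) dx + ∫_a^b (g/2) h(x)² φ′(x)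 dx − φ(b)·Ĥ*_{b,2} − φ(a)·Ĥ*_{a,2} = 0. -/
open intervalIntegral

/-- One-dimensional well-balance of the semi-discrete quasi-Lagrange moving mesh DG
scheme in the original variables `(h, m)`: at the lake-at-rest state `h + B ≡ C`,
`m ≡ 0`, both components of the discrete residual on the element `[a, b]` vanish. -/
theorem semi_discrete_QLMMDG_well_balanced_original_variables
    (g C a b : ℝ) (hab : a < b) (B Xd φ : ℝ → ℝ)
    (hB : ContDiff ℝ 1 B) (hX : ContDiff ℝ 1 Xd) (hφ : ContDiff ℝ 1 φ)
    (Ba Bb : ℝ) :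
    let h : ℝ → ℝ := fun x => C - B x
    let hsa : ℝ := max 0 (h a + B a - max (B a) Ba)
    let hsb : ℝ := max 0 (h b + B b - max (B b) Bb)
    let Hb : ℝ × ℝ := (-(Xd b) * hsb + Xd b * (hsb - h b),
      g / 2 * hsb ^ 2 + g / 2 * ((h b) ^ 2 - hsb ^ 2))
    let Ha : ℝ × ℝ := (Xd a * hsa - Xd a * (hsa - h a),
      -(g / 2 * hsa ^ 2 + g / 2 * ((h a) ^ 2 - hsa ^ 2)))
    ((∫ x in a..b, (-(Xd x) * h x) * deriv φ x) - φ b * Hb.1 - φ a * Ha.1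
        - ∫ x in a..b, φ x * deriv (fun y => h y * Xd y) x) = 0 ∧
    ((∫ x in a..b, (-(g * h x * deriv B x)) * φ x)
        + (∫ x in a..b, g / 2 * (h x) ^ 2 * deriv φ x)
        - φ b * Hb.2 - φ a * Ha.2) = 0 := by
  intro h hsa hsb Hb Ha
  have hBd : Differentiable ℝ B := hB.differentiable one_ne_zero
  have hXdd : Differentiable ℝ Xd := hX.differentiable one_ne_zero
  have hφd : Differentiable ℝ φ := hφ.differentiable one_ne_zero
  have hBc : Continuous (deriv B) := hB.continuous_deriv le_rfl
  have hXc : Continuous (deriv Xd) := hX.continuous_deriv le_rfl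
  have hφc : Continuous (deriv φ) := hφ.continuous_deriv le_rfl
  have hhc : Continuous h := continuous_const.sub hBd.continuous
  have hhd : ∀ x, HasDerivAt h (-(deriv B x)) x := fun x =>
    ((hBd x).hasDerivAt).const_sub C
  -- derivative of h * Xd
  have hud : ∀ x, HasDerivAt (fun y => h y * Xd y)
      (-(deriv B x) * Xd x + h x * deriv Xd x) x := fun x =>
    (hhd x).mul (hXdd x).hasDerivAt
  have hderiv_u : deriv (fun y => h y * Xd y)
      = fun x => -(deriv B x) * Xd x + h x * deriv Xd x :=
    funext fun x => (hud x).deriv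
  -- integration by parts for part 1
  have key1 := intervalIntegral.integral_deriv_mul_eq_sub
    (u := fun y => h y * Xd y) (v := φ)
    (u' := fun x => -(deriv B x) * Xd x + h x * deriv Xd x)
    (v' := deriv φ)
    (fun x _ => hud x) (fun x _ => (hφd x).hasDerivAt)
    (((hBc.neg.mul hXdd.continuous).add (hhc.mul hXc)).intervalIntegrable a b)
    (hφc.intervalIntegrable a b)
  beta_reduce at key1
  have split1 : (∫ x in a..b,
        ((-(deriv B x) * Xd x + h x * deriv Xd x) * φ x + (h x * Xd x) * deriv φ x))
      = (∫ x in a..b, (-(deriv B x) * Xd x + h x * deriv Xd x) * φ x)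
        + ∫ x in a..b, (h x * Xd x) * deriv φ x := by
    apply intervalIntegral.integral_add
    · exact (((hBc.neg.mul hXdd.continuous).add (hhc.mul hXc)).mul hφd.continuous).intervalIntegrable a b
    · exact ((hhc.mul hXdd.continuous).mul hφc).intervalIntegrable a b
  -- part 2 derivative: g/2 * h^2
  have hwd : ∀ x, HasDerivAt (fun y => g / 2 * (h y) ^ 2)
      (-(g * h x * deriv B x)) x := by
    intro x
    have : HasDerivAt (fun y => g / 2 * (h y) ^ 2)
        (g / 2 * (((2 : ℕ) : ℝ) * h x ^ (2 - 1) * -deriv B x)) x :=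
      (((hhd x).fun_pow 2).const_mul (g / 2))
    convert this using 1
    ring
  have key2 := intervalIntegral.integral_deriv_mul_eq_sub
    (u := fun y => g / 2 * (h y) ^ 2) (v := φ)
    (u' := fun x => -(g * h x * deriv B x))
    (v' := deriv φ)
    (fun x _ => hwd x) (fun x _ => (hφd x).hasDerivAt)
    (((continuous_const.mul hhc).mul hBc).neg.intervalIntegrable a b)
    (hφc.intervalIntegrable a b)
  beta_reduce at key2
  have split2 : (∫ x in a..b,
        ((-(g * h x * deriv B x)) * φ x + (g / 2 * (h x) ^ 2) * deriv φ x))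
      = (∫ x in a..b, (-(g * h x * deriv B x)) * φ x)
        + ∫ x in a..b, (g / 2 * (h x) ^ 2) * deriv φ x := by
    apply intervalIntegral.integral_add
    · exact ((((continuous_const.mul hhc).mul hBc).neg).mul hφd.continuous).intervalIntegrable a b
    · exact ((continuous_const.mul (hhc.pow 2)).mul hφc).intervalIntegrable a b
  constructor
  · have e1 : (∫ x in a..b, (-(Xd x) * h x) * deriv φ x)
        = - ∫ x in a..b, (h x * Xd x) * deriv φ x := by
      rw [← intervalIntegral.integral_neg]
      apply intervalIntegral.integral_congr
      intro x _; ring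
    have e2 : (∫ x in a..b, φ x * deriv (fun y => h y * Xd y) x)
        = ∫ x in a..b, (-(deriv B x) * Xd x + h x * deriv Xd x) * φ x := by
      rw [hderiv_u]
      apply intervalIntegral.integral_congr
      intro x _; ring
    rw [e1, e2]
    rw [split1] at key1
    have hHb : Hb.1 = -(Xd b) * h b := by simp only [Hb]; ring
    have hHa : Ha.1 = Xd a * h a := by simp only [Ha]; ring
    rw [hHb, hHa]
    linarith [key1]
  · rw [split2] at key2
    have hHb : Hb.2 = g / 2 * (h b) ^ 2 := by simp only [Hb]; ring
    have hHa : Ha.2 = -(g / 2 * (h a) ^ 2) := by simp only [Ha]; ring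
    rw [hHb, hHa]
    linarith [key2]
end

section
/- Let C ∈ ℝ, k ∈ ℕ, Δt > 0, and let aⁿ < bⁿ and ẋ_a, ẋ_b ∈ ℝ be such that a¹ := aⁿ + Δt·ẋ_a < b¹ := bⁿ + Δt·ẋ_b. Suppose p : ℝ → ℝ is a polynomial of degree at most k such that for every polynomial q of degree at most k, ∫_{a¹}^{b¹} p(x)·q((x − a¹)/(b¹ − a¹)) dx = ∫_{aⁿ}^{bⁿ} C·q((x − aⁿ)/(bⁿ − aⁿ)) dx + Δt·C·((ẋ_b − ẋ_a)/(bⁿ − aⁿ))·∫_{aⁿ}^{bⁿ} q((x − aⁿ)/(bⁿ − aⁿ)) dx. Then p is the constant polynomial C, i.e., p(x) = C for all x ∈ ℝ. -/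
open intervalIntegral
set_option maxHeartbeats 1000000

private lemma ref_integral (f : ℝ → ℝ) (a b : ℝ) (h : a < b) :
    (∫ x in a..b, f ((x - a) / (b - a))) = (b - a) * ∫ t in (0:ℝ)..1, f t := by
  have hc : b - a ≠ 0 := sub_ne_zero.mpr h.ne'
  have h1 : (∫ x in a..b, f ((x - a) / (b - a)))
      = ∫ x in a - a..b - a, f (x / (b - a)) :=
    intervalIntegral.integral_comp_sub_right (fun y => f (y / (b - a))) a
  rw [h1, intervalIntegral.integral_comp_div _ hc, sub_self, zero_div, div_self hc,
    smul_eq_mul]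

/-- Key step of the fully discrete well-balance proof in one dimension: if a DG
polynomial `p` of degree at most `k` on the moved element `[a¹, b¹]` satisfies the
Runge–Kutta stage update equation at the lake-at-rest state `ηⁿ ≡ C` against all
test polynomials of degree at most `k`, then `p` is the constant `C`. -/
theorem RK_stage_preserves_constant_surface
    (C : ℝ) (k : ℕ) (Δt : ℝ) (hΔt : 0 < Δt)
    (an bn xa xb : ℝ) (hab : an < bn)
    (hab1 : an + Δt * xa < bn + Δt * xb)
    (p : Polynomial ℝ) (hdeg : p.degree ≤ k)
    (hyp : ∀ q : Polynomial ℝ, q.degree ≤ k →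
      (∫ x in (an + Δt * xa)..(bn + Δt * xb),
          p.eval x * q.eval ((x - (an + Δt * xa)) / ((bn + Δt * xb) - (an + Δt * xa))))
        = (∫ x in an..bn, C * q.eval ((x - an) / (bn - an)))
            + Δt * C * ((xb - xa) / (bn - an)) *
              ∫ x in an..bn, q.eval ((x - an) / (bn - an))) :
    ∀ x : ℝ, p.eval x = C := by
  set a1 := an + Δt * xa with ha1
  set b1 := bn + Δt * xb with hb1
  have hL : (0:ℝ) < b1 - a1 := sub_pos.mpr hab1
  have hLn : (0:ℝ) < bn - an := sub_pos.mpr hab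
  have hLne : b1 - a1 ≠ 0 := hL.ne'
  have hLnne : bn - an ≠ 0 := hLn.ne'
  -- the pulled-back polynomial minus C
  set r : Polynomial ℝ :=
    p.comp (Polynomial.C (b1 - a1) * Polynomial.X + Polynomial.C a1) - Polynomial.C C with hr
  have hrdeg : r.degree ≤ k := by
    have h1 : (Polynomial.C (b1 - a1) * Polynomial.X + Polynomial.C a1).natDegree = 1 :=
      Polynomial.natDegree_linear hLne
    have h2 : (p.comp (Polynomial.C (b1 - a1) * Polynomial.X + Polynomial.C a1)).natDegree
        ≤ p.natDegree * 1 := h1 ▸ Polynomial.natDegree_comp_le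
    have h3 : p.natDegree ≤ k := Polynomial.natDegree_le_iff_degree_le.mpr hdeg
    have : r.natDegree ≤ k := by
      refine le_trans (Polynomial.natDegree_sub_le _ _) ?_
      simp only [Polynomial.natDegree_C, max_le_iff]
      exact ⟨le_trans h2 (by simpa using h3), Nat.zero_le _⟩
    exact Polynomial.natDegree_le_iff_degree_le.mp this
  -- evaluation of r
  have hreval : ∀ t : ℝ, r.eval t = p.eval ((b1 - a1) * t + a1) - C := by
    intro t; simp [hr, Polynomial.eval_comp]
  have hback : ∀ x : ℝ, r.eval ((x - a1) / (b1 - a1)) = p.eval x - C := by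
    intro x
    rw [hreval]
    rw [mul_div_cancel₀ _ hLne]
    ring_nf
  have key := hyp r hrdeg
  -- rewrite LHS integrand
  have hLHS : (∫ x in a1..b1, p.eval x * r.eval ((x - a1) / (b1 - a1)))
      = ∫ x in a1..b1,
          (fun t => (r.eval t + C) * r.eval t) ((x - a1) / (b1 - a1)) := by
    refine intervalIntegral.integral_congr fun x _ => ?_
    simp only [hback x]
    ring
  rw [hLHS, ref_integral (fun t => (r.eval t + C) * r.eval t) a1 b1 hab1,
    ref_integral (fun t => C * r.eval t) _ _ hab,
    ref_integral (fun t => r.eval t) _ _ hab] at key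
  set I := ∫ t in (0:ℝ)..1, r.eval t with hI
  have hint1 : IntervalIntegrable (fun t => (r.eval t)^2) MeasureTheory.volume 0 1 :=
    ((r.continuous_aeval.pow 2)).intervalIntegrable _ _
  have hint2 : IntervalIntegrable (fun t => C * r.eval t) MeasureTheory.volume 0 1 :=
    (continuous_const.mul r.continuous_aeval).intervalIntegrable _ _
  have hsplit : (∫ t in (0:ℝ)..1, (r.eval t + C) * r.eval t)
      = (∫ t in (0:ℝ)..1, (r.eval t)^2) + C * I := by
    have : (∫ t in (0:ℝ)..1, (r.eval t + C) * r.eval t)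
        = ∫ t in (0:ℝ)..1, ((r.eval t)^2 + C * r.eval t) := by
      refine intervalIntegral.integral_congr fun t _ => ?_; ring
    rw [this, intervalIntegral.integral_add hint1 hint2,
      intervalIntegral.integral_const_mul]
  have hCI : (∫ t in (0:ℝ)..1, C * r.eval t) = C * I := by
    rw [intervalIntegral.integral_const_mul]
  rw [hsplit, hCI] at key
  -- deduce the square integral vanishes
  have hJ : (∫ t in (0:ℝ)..1, (r.eval t)^2) = 0 := by
    have hexp : (b1 - a1) = (bn - an) + Δt * (xb - xa) := by
      simp only [ha1, hb1]; ring
    have : (b1 - a1) * ((∫ t in (0:ℝ)..1, (r.eval t)^2) + C * I)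
        = (b1 - a1) * (C * I) := by
      rw [key, hexp]; field_simp
    have h2 := mul_left_cancel₀ hLne this
    linarith
  -- r = 0
  have hr0 : r = 0 := by
    by_contra hrne
    have hfin : Set.Finite {t : ℝ | r.IsRoot t} := Polynomial.finite_setOf_isRoot hrne
    have hex : ∃ c ∈ Set.Icc (0:ℝ) 1, ¬ r.IsRoot c := by
      by_contra hall
      push_neg at hall
      have : Set.Infinite {t : ℝ | r.IsRoot t} :=
        (Set.Icc_infinite (by norm_num : (0:ℝ) < 1)).mono (fun t ht => hall t ht)
      exact this hfin
    obtain ⟨c, hc, hcne⟩ := hex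
    have hpos : 0 < ∫ t in (0:ℝ)..1, (r.eval t)^2 := by
      refine intervalIntegral.integral_pos (by norm_num) ?_ ?_ ?_
      · exact (r.continuous_aeval.pow 2).continuousOn
      · intro x _; positivity
      · exact ⟨c, hc, lt_of_le_of_ne (sq_nonneg _) (Ne.symm (pow_ne_zero 2 hcne))⟩
    exact hpos.ne' hJ
  -- conclude
  intro x
  have := hback x
  rw [hr0] at this
  simp at this
  linarith
end

section
/- Let p₁, p₂, p₃, v₁, v₂, v₃ ∈ ℝ² and define the moving triangle vertices x_i(t) = p_i + t·v_i for i = 1, 2, 3. Let E(t) be the 2×2 real matrix with columns x₂(t) − x₁(t) and x₃(t) − x₁(t), and let A(t) = (1/2)·det E(t) be the signed area of the triangle. Fix t_n ∈ ℝ and Δt ∈ ℝ, and define the GCL Runge–Kutta updates A₁ = A(t_n) + Δt·A′(t_n), A₂ = (3/4)·A(t_n) + (1/4)·( A₁ + Δt·A′(t_n + Δt) ), A₃ = (1/3)·A(t_n) + (2/3)·( A₂ + Δt·A′(t_n + Δt/2) ). Then A₃ = A(t_n + Δt); that is, the element area obtained from the GCL update of the third-order TVD Runge–Kutta scheme coincides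 with the area computed directly from the vertex coordinates at time t_n + Δt. -/
/-- The edge matrix of a triangle with vertices `x1, x2, x3 : ℝ²`:
its columns are `x2 - x1` and `x3 - x1`. -/
def edgeMat2 (x1 x2 x3 : Fin 2 → ℝ) : Matrix (Fin 2) (Fin 2) ℝ :=
  Matrix.of fun i j => ![x2 i - x1 i, x3 i - x1 i] j

lemma deriv_quad (c0 c1 c2 : ℝ) (t : ℝ) :
    deriv (fun t : ℝ => c0 + c1 * t + c2 * t ^ 2) t = c1 + 2 * c2 * t := by
  have h : HasDerivAt (fun t : ℝ => c0 + c1 * t + c2 * t ^ 2) (c1 + 2 * c2 * t) t := by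
    have h1 := ((hasDerivAt_id t).const_mul c1).const_add c0
    have h2 := (hasDerivAt_pow 2 t).const_mul c2
    have := h1.add h2
    refine this.congr_deriv ?_ |>.congr_of_eventuallyEq ?_
    · simp; ring
    · exact Filter.Eventually.of_forall fun x => by simp
  exact h.deriv

/-- For a triangle whose vertices move affinely in time, the GCL update of the
third-order TVD Runge–Kutta scheme reproduces exactly the signed area computed
directly from the vertex coordinates at time `tₙ + Δt`. -/
theorem gcl_rk3_area_exact
    (p1 p2 p3 v1 v2 v3 : Fin 2 → ℝ) (tn Δt : ℝ) :
    let A : ℝ → ℝ := fun t =>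
      (1 / 2) * (edgeMat2 (p1 + t • v1) (p2 + t • v2) (p3 + t • v3)).det
    let A1 : ℝ := A tn + Δt * deriv A tn
    let A2 : ℝ := (3 / 4) * A tn + (1 / 4) * (A1 + Δt * deriv A (tn + Δt))
    let A3 : ℝ := (1 / 3) * A tn + (2 / 3) * (A2 + Δt * deriv A (tn + Δt / 2))
    A3 = A (tn + Δt) := by
  have hA : (fun t : ℝ =>
      (1 / 2 : ℝ) * (edgeMat2 (p1 + t • v1) (p2 + t • v2) (p3 + t • v3)).det)
      = fun t : ℝ =>
        (1 / 2) * ((p2 0 - p1 0) * (p3 1 - p1 1) - (p3 0 - p1 0) * (p2 1 - p1 1))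
        + ((1 / 2) * ((p2 0 - p1 0) * (v3 1 - v1 1) + (v2 0 - v1 0) * (p3 1 - p1 1)
            - (p3 0 - p1 0) * (v2 1 - v1 1) - (v3 0 - v1 0) * (p2 1 - p1 1))) * t
        + ((1 / 2) * ((v2 0 - v1 0) * (v3 1 - v1 1) - (v3 0 - v1 0) * (v2 1 - v1 1))) * t ^ 2 := by
    funext t
    simp [edgeMat2, Matrix.det_fin_two]
    ring
  have hA' := fun t => congrFun hA t
  simp only [hA, deriv_quad] 
  simp only [hA'] at *
  ring
end

section
/- Let p₁, p₂, p₃, p₄, v₁, v₂, v₃, v₄ ∈ ℝ³ and define the moving tetrahedron vertices x_i(t) = p_i + t·v_i for i = 1, 2, 3, 4. Let E(t) be the 3×3 real matrix with columns x₂(t) − x₁(t), x₃(t) − x₁(t), x₄(t) − x₁(t), and let V(t) = (1/6)·det E(t) be the signed volume of the tetrahedron. Fix t_n ∈ ℝ and Δt ∈ ℝ, and define the GCL Runge–Kutta updates V₁ = V(t_n) + Δt·V′(t_n), V₂ = (3/4)·V(t_n) + (1/4)·( V₁ + Δt·V′(t_n + Δt) ), V₃ = (1/3)·V(t_n) + (2/3)·(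 V₂ + Δt·V′(t_n + Δt/2) ). Then V₃ = V(t_n + Δt); that is, the element volume obtained from the GCL update of the third-order TVD Runge–Kutta scheme coincides with the volume computed directly from the vertex coordinates at time t_n + Δt. -/
/-- The edge matrix of a tetrahedron with vertices `x1, x2, x3, x4 : ℝ³`:
its columns are `x2 - x1`, `x3 - x1` and `x4 - x1`. -/
def edgeMat3 (x1 x2 x3 x4 : Fin 3 → ℝ) : Matrix (Fin 3) (Fin 3) ℝ :=
  Matrix.of fun i j => ![x2 i - x1 i, x3 i - x1 i, x4 i - x1 i] j

lemma cubic_deriv (a b c d : ℝ) :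
    deriv (fun t : ℝ => a + b * t + c * t ^ 2 + d * t ^ 3)
      = fun t => b + 2 * c * t + 3 * d * t ^ 2 := by
  funext t
  have h : HasDerivAt (fun t : ℝ => a + b * t + c * t ^ 2 + d * t ^ 3)
      (0 + b * 1 + c * (↑(2:ℕ) * t ^ 1) + d * (↑(3:ℕ) * t ^ 2)) t :=
    (((hasDerivAt_const t a).add ((hasDerivAt_id t).const_mul b)).add
      ((hasDerivAt_pow 2 t).const_mul c)).add ((hasDerivAt_pow 3 t).const_mul d)
  rw [h.deriv]; push_cast; ring

/-- For a tetrahedron whose vertices move affinely in time, the GCL update of the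
third-order TVD Runge–Kutta scheme reproduces exactly the signed volume computed
directly from the vertex coordinates at time `tₙ + Δt`. -/
theorem gcl_rk3_volume_exact
    (p1 p2 p3 p4 v1 v2 v3 v4 : Fin 3 → ℝ) (tn Δt : ℝ) :
    let V : ℝ → ℝ := fun t =>
      (1 / 6) * (edgeMat3 (p1 + t • v1) (p2 + t • v2) (p3 + t • v3) (p4 + t • v4)).det
    let V1 : ℝ := V tn + Δt * deriv V tn
    let V2 : ℝ := (3 / 4) * V tn + (1 / 4) * (V1 + Δt * deriv V (tn + Δt))
    let V3 : ℝ := (1 / 3) * V tn + (2 / 3) * (V2 + Δt * deriv V (tn + Δt / 2))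
    V3 = V (tn + Δt) := by
  intro V V1 V2 V3
  obtain ⟨A, B, C, D, hV⟩ :
      ∃ A B C D : ℝ, ∀ t, V t = A + B * t + C * t ^ 2 + D * t ^ 3 := by
    refine ⟨V 0,
      (V 1 - V (-1)) / 2 -
        (((V 2 - V 0 - 4 * ((V 1 + V (-1)) / 2 - V 0)) / 2) - (V 1 - V (-1)) / 2) / 3,
      (V 1 + V (-1)) / 2 - V 0,
      (((V 2 - V 0 - 4 * ((V 1 + V (-1)) / 2 - V 0)) / 2) - (V 1 - V (-1)) / 2) / 3,
      fun t => ?_⟩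
    simp only [V, edgeMat3, Matrix.det_fin_three, Matrix.of_apply, Matrix.cons_val',
      Matrix.cons_val_zero, Matrix.cons_val_one, Matrix.head_cons, Matrix.empty_val',
      Matrix.cons_val_fin_one, Matrix.head_fin_const, Pi.add_apply, Pi.smul_apply,
      smul_eq_mul, Matrix.cons_val_two, Matrix.tail_cons]
    ring
  have hVf : V = fun t => A + B * t + C * t ^ 2 + D * t ^ 3 := funext hV
  simp only [V3, V2, V1, hVf, cubic_deriv]
  ring
end
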